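/- If the metric of a Kenmotsu manifold is a gradient almost *-Ricci soliton with potential function f and soliton function λ, then d(f + λ) = ξ(f + λ)η, i.e., X(f + λ) = 0 for all X in the kernel of η. -/

import Mathlib

/-- An abstract algebraic model of a `(2n+1)`-dimensional Kenmotsu manifold:
`C` plays the role of the ring of smooth functions on the manifold and vector
fields are modelled as `ℝ`-derivations of `C`.  A global orthonormal frame `e`
is included in order to express traces (Ricci tensor, scalar curvature). -/
structure KenmotsuManifold (n : ℕ) (C : Type*) [CommRing C] [Algebra ℝ C] where
  /-- the Riemannian metric -/
  g : Derivation ℝ C C → Derivation ℝ C C → C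
  /-- the structure `(1,1)`-tensor field -/
  φ : Derivation ℝ C C → Derivation ℝ C C
  /-- the Reeb (characteristic) vector field -/
  ξ : Derivation ℝ C C
  /-- the contact `1`-form -/
  η : Derivation ℝ C C → C
  /-- the Levi-Civita connection -/
  nabla : Derivation ℝ C C → Derivation ℝ C C → Derivation ℝ C C
  /-- a global orthonormal frame, used to take traces -/
  e : Fin (2 * n + 1) → Derivation ℝ C C
  g_symm : ∀ X Y, g X Y = g Y X
  g_add_left : ∀ X Y Z, g (X + Y) Z = g X Z + g Y Z
  g_smul_left : ∀ (f : C) (X Y), g (f • X) Y = f * g X Y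
  g_nondeg : ∀ X, (∀ Y, g X Y = 0) → X = 0
  g_frame : ∀ i j, g (e i) (e j) = if i = j then 1 else 0
  frame_span : ∀ X : Derivation ℝ C C, X = ∑ i, g X (e i) • e i
  phi_phi : ∀ X, φ (φ X) = -X + η X • ξ
  phi_linear : ∀ (f : C) (X Y), φ (f • X + Y) = f • φ X + φ Y
  eta_xi : η ξ = 1
  eta_def : ∀ X, η X = g X ξ
  compat_phi : ∀ X Y, g (φ X) (φ Y) = g X Y - η X * η Y
  nabla_add_left : ∀ X Y Z, nabla (X + Y) Z = nabla X Z + nabla Y Z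
  nabla_smul_left : ∀ (f : C) (X Y), nabla (f • X) Y = f • nabla X Y
  nabla_add_right : ∀ X Y Z, nabla X (Y + Z) = nabla X Y + nabla X Z
  nabla_leibniz : ∀ (X) (f : C) (Y), nabla X (f • Y) = X f • Y + f • nabla X Y
  torsion_free : ∀ X Y, nabla X Y - nabla Y X = ⁅X, Y⁆
  metric_compat : ∀ X Y Z, X (g Y Z) = g (nabla X Y) Z + g Y (nabla X Z)
  /-- the Kenmotsu condition `(∇_X φ)Y = g(φX,Y)ξ - η(Y)φX` -/
  kenmotsu : ∀ X Y, nabla X (φ Y) - φ (nabla X Y) = g (φ X) Y • ξ - η Y • φ X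

namespace KenmotsuManifold

variable {n : ℕ} {C : Type*} [CommRing C] [Algebra ℝ C] (K : KenmotsuManifold n C)

/-- the Riemann curvature tensor `R(X,Y)Z = ∇_X∇_Y Z - ∇_Y∇_X Z - ∇_{[X,Y]}Z` -/
def Rm (X Y Z : Derivation ℝ C C) : Derivation ℝ C C :=
  K.nabla X (K.nabla Y Z) - K.nabla Y (K.nabla X Z) - K.nabla ⁅X, Y⁆ Z

/-- the Ricci tensor `S(X,Y) = trace (Z ↦ R(Z,X)Y)` -/
def S (X Y : Derivation ℝ C C) : C := ∑ i, K.g (K.Rm (K.e i) X Y) (K.e i)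

/-- the Ricci operator `Q`, `g(QX,Y) = S(X,Y)` -/
def Q (X : Derivation ℝ C C) : Derivation ℝ C C := ∑ i, K.S X (K.e i) • K.e i

/-- the scalar curvature `r` -/
def r : C := ∑ i, K.S (K.e i) (K.e i)

/-- the `*`-Ricci tensor `S*(X,Y) = (1/2) trace (Z ↦ R(X,φY)φZ)` -/
noncomputable def Sstar (X Y : Derivation ℝ C C) : C :=
  (2 : ℝ)⁻¹ • ∑ i, K.g (K.Rm X (K.φ Y) (K.φ (K.e i))) (K.e i)

/-- the covariant derivative `(∇_X Q)Y` of the Ricci operator -/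
def nablaQ (X Y : Derivation ℝ C C) : Derivation ℝ C C :=
  K.nabla X (K.Q Y) - K.Q (K.nabla X Y)

/-- the Lie derivative `(£_V g)(X,Y)` of the metric -/
def lieG (V X Y : Derivation ℝ C C) : C :=
  V (K.g X Y) - K.g ⁅V, X⁆ Y - K.g X ⁅V, Y⁆

/-- the Lie derivative `(£_V S)(X,Y)` of the Ricci tensor -/
def lieS (V X Y : Derivation ℝ C C) : C :=
  V (K.S X Y) - K.S ⁅V, X⁆ Y - K.S X ⁅V, Y⁆

/-- `g` is a `*`-Ricci soliton with potential vector field `V` and soliton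
constant `l`: `£_V g + 2S* + 2l g = 0`. -/
def IsStarRicciSoliton (V : Derivation ℝ C C) (l : ℝ) : Prop :=
  ∀ X Y, K.lieG V X Y + 2 * K.Sstar X Y + (2 * l) • K.g X Y = 0

/-- `g` is a gradient almost `*`-Ricci soliton with potential function `f`
(with gradient `F`, i.e. `g(F,X) = Xf`) and soliton function `l`:
`Hess f + S* + l g = 0`. -/
def IsGradAlmostStarRicciSoliton (f : C) (F : Derivation ℝ C C) (l : C) : Prop :=
  (∀ X, K.g F X = X f) ∧ ∀ X Y, K.g (K.nabla X F) Y + K.Sstar X Y + l * K.g X Y = 0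

/-- `M` is `η`-Einstein: `S = α g + β η⊗η`. -/
def IsEtaEinstein : Prop :=
  ∃ α β : C, ∀ X Y, K.S X Y = α * K.g X Y + β * (K.η X * K.η Y)

end KenmotsuManifold

namespace KenmotsuManifold

variable {n : ℕ} {C : Type*} [CommRing C] [Algebra ℝ C] (K : KenmotsuManifold n C)

lemma aux_half {a b : C} (h : a + a = b + b) : a = b := by
  have h2 : ((2:ℝ)⁻¹) • (a + a) = ((2:ℝ)⁻¹) • (b + b) := by rw [h]
  have e : ∀ x : C, ((2:ℝ)⁻¹) • (x + x) = x := by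
    intro x
    rw [smul_add, ← add_smul]
    norm_num
  rwa [e, e] at h2

lemma aux_g_zero_left (Y : Derivation ℝ C C) : K.g 0 Y = 0 := by
  have := K.g_smul_left 0 0 Y; simpa using this

lemma aux_g_zero_right (X : Derivation ℝ C C) : K.g X 0 = 0 := by
  rw [K.g_symm, K.aux_g_zero_left]

lemma aux_g_add_right (X Y Z : Derivation ℝ C C) : K.g X (Y + Z) = K.g X Y + K.g X Z := by
  rw [K.g_symm, K.g_add_left, K.g_symm, K.g_symm Z]

lemma aux_g_smul_right (f : C) (X Y : Derivation ℝ C C) : K.g X (f • Y) = f * K.g X Y := by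
  rw [K.g_symm, K.g_smul_left, K.g_symm]

lemma aux_g_neg_left (X Y : Derivation ℝ C C) : K.g (-X) Y = -K.g X Y := by
  rw [show -X = (-1 : C) • X by rw [neg_one_smul], K.g_smul_left]; ring

lemma aux_g_neg_right (X Y : Derivation ℝ C C) : K.g X (-Y) = -K.g X Y := by
  rw [K.g_symm, K.aux_g_neg_left, K.g_symm]

lemma aux_g_sub_left (X Y Z : Derivation ℝ C C) : K.g (X - Y) Z = K.g X Z - K.g Y Z := by
  rw [sub_eq_add_neg, K.g_add_left, K.aux_g_neg_left, sub_eq_add_neg]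

lemma aux_g_sub_right (X Y Z : Derivation ℝ C C) : K.g X (Y - Z) = K.g X Y - K.g X Z := by
  rw [sub_eq_add_neg, K.aux_g_add_right, K.aux_g_neg_right, sub_eq_add_neg]

lemma aux_g_sum_left {m : ℕ} (v : Fin m → Derivation ℝ C C) (Y : Derivation ℝ C C) :
    K.g (∑ i, v i) Y = ∑ i, K.g (v i) Y :=
  map_sum (AddMonoidHom.mk' (fun X => K.g X Y) (fun a b => K.g_add_left a b Y)) v Finset.univ

lemma aux_phi_zero : K.φ 0 = 0 := by
  have h := K.phi_linear 1 0 0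
  simp only [one_smul, add_zero] at h
  exact left_eq_add.mp h

end KenmotsuManifold
namespace KenmotsuManifold

variable {n : ℕ} {C : Type*} [CommRing C] [Algebra ℝ C] (K : KenmotsuManifold n C)

lemma aux_phi_add (X Y : Derivation ℝ C C) : K.φ (X + Y) = K.φ X + K.φ Y := by
  have h := K.phi_linear 1 X Y; simpa using h

lemma aux_phi_smul (f : C) (X : Derivation ℝ C C) : K.φ (f • X) = f • K.φ X := by
  have h := K.phi_linear f X 0; simpa [K.aux_phi_zero] using h

lemma aux_phi_neg (X : Derivation ℝ C C) : K.φ (-X) = -K.φ X := by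
  rw [show -X = (-1 : C) • X by rw [neg_one_smul], K.aux_phi_smul, neg_one_smul]

lemma aux_phi_sub (X Y : Derivation ℝ C C) : K.φ (X - Y) = K.φ X - K.φ Y := by
  rw [sub_eq_add_neg, K.aux_phi_add, K.aux_phi_neg, sub_eq_add_neg]

lemma aux_g_xi_xi : K.g K.ξ K.ξ = 1 := by rw [← K.eta_def, K.eta_xi]

/-- the anomaly scalar `c = η(φξ)` -/
def cc : C := K.g (K.φ K.ξ) K.ξ

/-- `φξ = c • ξ` -/
lemma aux_phi_xi : K.φ K.ξ = K.cc • K.ξ := by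
  have h1 := K.phi_phi (K.φ K.ξ)
  have h2 : K.φ (K.φ (K.φ K.ξ)) = 0 := by
    rw [K.phi_phi K.ξ, K.eta_xi, one_smul, neg_add_cancel, K.aux_phi_zero]
  rw [h2] at h1
  have h3 : K.φ K.ξ = K.η (K.φ K.ξ) • K.ξ := neg_add_eq_zero.mp h1.symm
  rw [h3, K.eta_def, cc]

/-- `η(φX) = c·η(X)`, in `g` form -/
lemma aux_eta_phi (X : Derivation ℝ C C) : K.g (K.φ X) K.ξ = K.cc * K.g X K.ξ := by
  have h1 := K.phi_phi (K.φ X)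
  have h2 : K.φ (K.φ (K.φ X)) = -(K.φ X) + (K.cc * K.η X) • K.ξ := by
    rw [K.phi_phi X, K.aux_phi_add, K.aux_phi_neg, K.aux_phi_smul, K.aux_phi_xi,
      smul_smul, mul_comm]
  rw [h2] at h1
  have h3 : (K.cc * K.η X) • K.ξ = K.η (K.φ X) • K.ξ := by
    linear_combination (norm := module) h1
  have h4 := congrArg (fun W => K.g W K.ξ) h3
  simp only [K.g_smul_left, K.aux_g_xi_xi, mul_one] at h4
  rw [← K.eta_def, ← h4, K.eta_def]

lemma aux_cc_sq : K.cc * K.cc = 0 := by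
  have h := K.compat_phi K.ξ K.ξ
  rw [K.aux_phi_xi, K.g_smul_left, K.aux_g_smul_right, K.aux_g_xi_xi, K.eta_xi] at h
  simpa using h

/-- `g(φA,B) + g(A,φB) = 2c·η(A)η(B)` -/
lemma aux_phi_skew (A B : Derivation ℝ C C) :
    K.g (K.φ A) B + K.g A (K.φ B) = 2 * K.cc * (K.g A K.ξ * K.g B K.ξ) := by
  have hB : B = K.g B K.ξ • K.ξ - K.φ (K.φ B) := by
    rw [K.phi_phi B, K.eta_def]
    linear_combination (norm := module)
  have h1 : K.g (K.φ A) B = K.g B K.ξ * (K.cc * K.g A K.ξ) - K.g (K.φ A) (K.φ (K.φ B)) := by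
    conv_lhs => rw [hB]
    rw [K.aux_g_sub_right, K.aux_g_smul_right, K.aux_eta_phi]
  rw [K.compat_phi A (K.φ B)] at h1
  simp only [K.eta_def] at h1
  rw [K.aux_eta_phi] at h1
  rw [h1]; ring

end KenmotsuManifold
namespace KenmotsuManifold

variable {n : ℕ} {C : Type*} [CommRing C] [Algebra ℝ C] (K : KenmotsuManifold n C)

lemma aux_nabla_zero_left (Y : Derivation ℝ C C) : K.nabla 0 Y = 0 := by
  have := K.nabla_smul_left 0 0 Y; simpa using this

lemma aux_nabla_zero_right (X : Derivation ℝ C C) : K.nabla X 0 = 0 := by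
  have := K.nabla_leibniz X 0 0; simpa using this

lemma aux_nabla_neg_right (X Y : Derivation ℝ C C) : K.nabla X (-Y) = -K.nabla X Y := by
  have h := K.nabla_add_right X Y (-Y)
  simp only [add_neg_cancel, K.aux_nabla_zero_right] at h
  exact (neg_eq_of_add_eq_zero_right h.symm).symm

lemma aux_nabla_sub_right (X Y Z : Derivation ℝ C C) :
    K.nabla X (Y - Z) = K.nabla X Y - K.nabla X Z := by
  rw [sub_eq_add_neg, K.nabla_add_right, K.aux_nabla_neg_right, sub_eq_add_neg]

lemma aux_nabla_neg_left (X Y : Derivation ℝ C C) : K.nabla (-X) Y = -K.nabla X Y := by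
  rw [show -X = (-1 : C) • X by rw [neg_one_smul], K.nabla_smul_left, neg_one_smul]

lemma aux_nabla_sub_left (X Y Z : Derivation ℝ C C) :
    K.nabla (X - Y) Z = K.nabla X Z - K.nabla Y Z := by
  rw [sub_eq_add_neg, K.nabla_add_left, K.aux_nabla_neg_left, sub_eq_add_neg]

/-- `η(∇_X ξ) = 0` -/
lemma aux_eta_nabla_xi (X : Derivation ℝ C C) : K.g (K.nabla X K.ξ) K.ξ = 0 := by
  have h := K.metric_compat X K.ξ K.ξ
  rw [K.aux_g_xi_xi, K.g_symm K.ξ (K.nabla X K.ξ)] at h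
  simp only [Derivation.map_one_eq_zero] at h
  exact aux_half (by linear_combination -h)

end KenmotsuManifold
namespace KenmotsuManifold

variable {n : ℕ} {C : Type*} [CommRing C] [Algebra ℝ C] (K : KenmotsuManifold n C)

lemma aux_cc_d (X : Derivation ℝ C C) : K.cc * X K.cc = 0 := by
  have h0 : X (K.cc * K.cc) = 0 := by rw [K.aux_cc_sq, map_zero]
  rw [Derivation.leibniz] at h0
  simp only [smul_eq_mul] at h0
  exact aux_half (by linear_combination h0)

/-- `∇_X ξ = X - η(X)ξ - c φX` -/
lemma aux_nabla_xi (X : Derivation ℝ C C) :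
    K.nabla X K.ξ = X - K.g X K.ξ • K.ξ - K.cc • K.φ X := by
  have hk := K.kenmotsu X K.ξ
  rw [K.aux_phi_xi, K.nabla_leibniz, K.aux_eta_phi, K.eta_xi, one_smul] at hk
  have hphi : K.φ (K.nabla X K.ξ) =
      X K.cc • K.ξ + K.cc • K.nabla X K.ξ - (K.cc * K.g X K.ξ) • K.ξ + K.φ X := by
    linear_combination (norm := module) -hk
  have h2 := congrArg K.φ hphi
  rw [K.phi_phi (K.nabla X K.ξ), K.eta_def, K.aux_eta_nabla_xi, zero_smul, add_zero,
    K.aux_phi_add, K.aux_phi_sub, K.aux_phi_add, K.aux_phi_smul, K.aux_phi_smul,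
    K.aux_phi_smul, K.aux_phi_xi, hphi, K.phi_phi X, K.eta_def] at h2
  have m1 : (K.cc * K.cc) • K.nabla X K.ξ = (0:C) • K.nabla X K.ξ := by rw [K.aux_cc_sq]
  have m2 : (K.cc * X K.cc) • K.ξ = (0:C) • K.ξ := by rw [K.aux_cc_d]
  have m3 : (X K.cc * K.cc) • K.ξ = (0:C) • K.ξ := by rw [mul_comm, K.aux_cc_d]
  have m4 : (K.cc * (K.cc * K.g X K.ξ)) • K.ξ = (0:C) • K.ξ := by
    rw [← mul_assoc, K.aux_cc_sq, zero_mul]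
  have m5 : ((K.cc * K.g X K.ξ) * K.cc) • K.ξ = (0:C) • K.ξ := by
    rw [mul_comm, ← mul_assoc, K.aux_cc_sq, zero_mul]
  linear_combination (norm := module) -h2 - m1 - m2 - m3 + m4 + m5

end KenmotsuManifold
namespace KenmotsuManifold

variable {n : ℕ} {C : Type*} [CommRing C] [Algebra ℝ C] (K : KenmotsuManifold n C)

lemma aux_lie_smul (a : C) (X Y : Derivation ℝ C C) :
    ⁅X, a • Y⁆ = X a • Y + a • ⁅X, Y⁆ := by
  ext b
  simp only [Derivation.commutator_apply, Derivation.add_apply, Derivation.smul_apply,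
    smul_eq_mul, Derivation.leibniz]
  ring

lemma aux_rm_add3 (X Y Z W : Derivation ℝ C C) :
    K.Rm X Y (Z + W) = K.Rm X Y Z + K.Rm X Y W := by
  simp only [Rm, K.nabla_add_right]
  abel

lemma aux_rm_skew1 (X Y Z : Derivation ℝ C C) : K.Rm X Y Z = -K.Rm Y X Z := by
  simp only [Rm]
  rw [show ⁅Y, X⁆ = -⁅X, Y⁆ from by rw [← lie_skew X Y, neg_neg], K.aux_nabla_neg_left]
  abel

lemma aux_rm_smul2 (a : C) (X Y Z : Derivation ℝ C C) :
    K.Rm X (a • Y) Z = a • K.Rm X Y Z := by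
  simp only [Rm, K.nabla_smul_left, K.nabla_leibniz, aux_lie_smul, K.nabla_add_left]
  module

lemma aux_rm_self (X Y Z : Derivation ℝ C C) : K.g (K.Rm X Y Z) Z = 0 := by
  have h1 := K.metric_compat X (K.nabla Y Z) Z
  have h1' := K.metric_compat X Z (K.nabla Y Z)
  have h2 := K.metric_compat Y (K.nabla X Z) Z
  have h2' := K.metric_compat Y Z (K.nabla X Z)
  have h3 := K.metric_compat ⁅X, Y⁆ Z Z
  have h4 := K.metric_compat X Z Z
  have h5 := K.metric_compat Y Z Z
  have hc : ⁅X, Y⁆ (K.g Z Z) = X (Y (K.g Z Z)) - Y (X (K.g Z Z)) :=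
    Derivation.commutator_apply _
  have hX5 : X (Y (K.g Z Z)) = X (K.g (K.nabla Y Z) Z) + X (K.g Z (K.nabla Y Z)) := by
    rw [h5, map_add]
  have hY4 : Y (X (K.g Z Z)) = Y (K.g (K.nabla X Z) Z) + Y (K.g Z (K.nabla X Z)) := by
    rw [h4, map_add]
  have s2 : K.g Z (K.nabla X (K.nabla Y Z)) = K.g (K.nabla X (K.nabla Y Z)) Z := K.g_symm _ _
  have s3 : K.g Z (K.nabla Y (K.nabla X Z)) = K.g (K.nabla Y (K.nabla X Z)) Z := K.g_symm _ _
  have s4 : K.g Z (K.nabla ⁅X, Y⁆ Z) = K.g (K.nabla ⁅X, Y⁆ Z) Z := K.g_symm _ _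
  have hG : K.g (K.Rm X Y Z) Z = K.g (K.nabla X (K.nabla Y Z)) Z
      - K.g (K.nabla Y (K.nabla X Z)) Z - K.g (K.nabla ⁅X, Y⁆ Z) Z := by
    simp only [Rm]
    rw [K.aux_g_sub_left, K.aux_g_sub_left]
  refine aux_half ?_
  rw [hG]
  linear_combination -h1 - h1' - hX5 + h2 + h2' + hY4 - hc + h3 - s2 + s3 + s4

lemma aux_rm_skew34 (X Y Z W : Derivation ℝ C C) :
    K.g (K.Rm X Y Z) W + K.g (K.Rm X Y W) Z = 0 := by
  have h := K.aux_rm_self X Y (Z + W)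
  rw [K.aux_rm_add3, K.g_add_left, K.aux_g_add_right, K.aux_g_add_right,
    K.aux_rm_self, K.aux_rm_self] at h
  linear_combination h

lemma aux_bianchi (X Y Z : Derivation ℝ C C) :
    K.Rm X Y Z + K.Rm Y Z X + K.Rm Z X Y = 0 := by
  have j := lie_jacobi X Y Z
  have e : ∀ A B D : Derivation ℝ C C, K.nabla ⁅A, B⁆ D =
      K.nabla D (K.nabla A B) - K.nabla D (K.nabla B A) - ⁅D, ⁅A, B⁆⁆ := by
    intro A B D
    have h1 := K.torsion_free D ⁅A, B⁆
    have h2 : K.nabla D ⁅A, B⁆ = K.nabla D (K.nabla A B) - K.nabla D (K.nabla B A) := by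
      rw [← K.aux_nabla_sub_right, K.torsion_free]
    rw [h2] at h1
    linear_combination (norm := module) -h1
  simp only [Rm]
  rw [e X Y Z, e Y Z X, e Z X Y]
  linear_combination (norm := module) j

lemma aux_rm_pair (X Y Z W : Derivation ℝ C C) :
    K.g (K.Rm X Y Z) W = K.g (K.Rm Z W X) Y := by
  have bg : ∀ a b c d : Derivation ℝ C C,
      K.g (K.Rm a b c) d + K.g (K.Rm b c a) d + K.g (K.Rm c a b) d = 0 := by
    intro a b c d
    have := congrArg (fun V => K.g V d) (K.aux_bianchi a b c)
    simpa [K.g_add_left, K.aux_g_zero_left] using this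
  have s1 : ∀ a b c d : Derivation ℝ C C,
      K.g (K.Rm a b c) d + K.g (K.Rm b a c) d = 0 := by
    intro a b c d
    rw [K.aux_rm_skew1 a b c, K.aux_g_neg_left]
    ring
  have s2 := K.aux_rm_skew34
  refine aux_half ?_
  linear_combination (bg X Y Z W) - (bg X Y W Z) - (bg X Z W Y) + (bg Y Z W X)
    + (s2 X Y Z W) - (s1 X Z Y W) + (s2 X Z Y W) + (s1 X W Y Z) - (s2 X W Y Z)
    + (s1 X W Z Y) - (s2 Y Z X W) + (s2 Y W X Z) - (s1 Y W Z X) - (s2 Z W X Y)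

end KenmotsuManifold
namespace KenmotsuManifold

variable {n : ℕ} {C : Type*} [CommRing C] [Algebra ℝ C] (K : KenmotsuManifold n C)

lemma aux_d_cc (X : Derivation ℝ C C) : X K.cc = 0 := by
  have h1 : K.nabla X (K.φ K.ξ) = X K.cc • K.ξ + K.cc • K.nabla X K.ξ := by
    rw [K.aux_phi_xi, K.nabla_leibniz]
  have hk := K.kenmotsu X K.ξ
  rw [K.eta_xi, one_smul, K.aux_eta_phi, h1, K.aux_nabla_xi, K.aux_phi_sub, K.aux_phi_sub,
    K.aux_phi_smul, K.aux_phi_smul, K.aux_phi_xi, K.phi_phi X, K.eta_def] at hk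
  have hx : X K.cc • K.ξ = (K.cc * K.cc) • K.φ X := by
    linear_combination (norm := module) hk
  rw [K.aux_cc_sq, zero_smul] at hx
  have h2 := congrArg (fun W => K.g W K.ξ) hx
  simp only [K.g_smul_left, K.aux_g_xi_xi, mul_one, K.aux_g_zero_left] at h2
  exact h2

lemma aux_nn_xi (X Y : Derivation ℝ C C) :
    K.nabla X (K.nabla Y K.ξ) = K.nabla X Y - K.g (K.nabla X Y) K.ξ • K.ξ
      - K.g Y X • K.ξ + (2 * (K.g X K.ξ * K.g Y K.ξ)) • K.ξ - K.g Y K.ξ • X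
      + (2 * (K.cc * K.g Y K.ξ)) • K.φ X - K.cc • K.φ (K.nabla X Y) := by
  have hk : K.nabla X (K.φ Y) = K.φ (K.nabla X Y) + K.g (K.φ X) Y • K.ξ
      - K.g Y K.ξ • K.φ X := by
    have hh := K.kenmotsu X Y
    rw [K.eta_def] at hh
    linear_combination (norm := module) hh
  have hm : X (K.g Y K.ξ) = K.g (K.nabla X Y) K.ξ + K.g Y X
      - K.g X K.ξ * K.g Y K.ξ - K.cc * K.g (K.φ X) Y := by
    rw [K.metric_compat, K.aux_nabla_xi X, K.aux_g_sub_right, K.aux_g_sub_right,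
      K.aux_g_smul_right, K.aux_g_smul_right, K.g_symm Y (K.φ X)]
    ring
  rw [K.aux_nabla_xi Y, K.aux_nabla_sub_right, K.aux_nabla_sub_right, K.nabla_leibniz,
    K.nabla_leibniz, K.aux_d_cc, zero_smul, zero_add, K.aux_nabla_xi X, hk, hm]
  module

lemma aux_rm_xi (X Y : Derivation ℝ C C) :
    K.Rm X Y K.ξ = K.g X K.ξ • Y - K.g Y K.ξ • X
      + (2 * (K.cc * K.g Y K.ξ)) • K.φ X - (2 * (K.cc * K.g X K.ξ)) • K.φ Y := by
  have hXY := K.aux_nn_xi X Y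
  have hYX := K.aux_nn_xi Y X
  have hb : K.nabla ⁅X, Y⁆ K.ξ = (K.nabla X Y - K.nabla Y X)
      - (K.g (K.nabla X Y) K.ξ - K.g (K.nabla Y X) K.ξ) • K.ξ
      - K.cc • (K.φ (K.nabla X Y) - K.φ (K.nabla Y X)) := by
    rw [K.aux_nabla_xi ⁅X, Y⁆, ← K.torsion_free, K.aux_g_sub_left, K.aux_phi_sub]
  have hsym : K.g Y X • K.ξ = K.g X Y • K.ξ := by rw [K.g_symm]
  simp only [Rm]
  rw [hXY, hYX, hb]
  linear_combination (norm := module) -hsym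

lemma aux_cphi (Z W : Derivation ℝ C C) : K.cc * K.g (K.φ Z) W = 0 := by
  have ha : K.g (K.Rm K.ξ Z K.ξ) W = K.g K.ξ K.ξ * K.g Z W - K.g Z K.ξ * K.g K.ξ W
      + (2 * (K.cc * K.g Z K.ξ)) * (K.cc * K.g K.ξ W)
      - (2 * (K.cc * K.g K.ξ K.ξ)) * K.g (K.φ Z) W := by
    rw [K.aux_rm_xi, K.aux_g_sub_left, K.g_add_left, K.aux_g_sub_left, K.g_smul_left,
      K.g_smul_left, K.g_smul_left, K.g_smul_left, K.aux_phi_xi, K.g_smul_left]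
  have hbb : K.g (K.Rm W K.ξ K.ξ) Z = K.g W K.ξ * K.g K.ξ Z - K.g K.ξ K.ξ * K.g W Z
      + (2 * (K.cc * K.g K.ξ K.ξ)) * K.g (K.φ W) Z
      - (2 * (K.cc * K.g W K.ξ)) * (K.cc * K.g K.ξ Z) := by
    rw [K.aux_rm_xi, K.aux_g_sub_left, K.g_add_left, K.aux_g_sub_left, K.g_smul_left,
      K.g_smul_left, K.g_smul_left, K.g_smul_left, K.aux_phi_xi, K.g_smul_left]
  have hskew := K.aux_rm_skew34 K.ξ Z K.ξ W
  have hpair := K.aux_rm_pair K.ξ Z W K.ξ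
  have cps := congrArg (fun t => K.cc * t) (K.aux_phi_skew Z W)
  have hxx := K.aux_g_xi_xi
  have hsq := K.aux_cc_sq
  have s1 : K.g Z W = K.g W Z := K.g_symm _ _
  have s2 : K.g K.ξ W = K.g W K.ξ := K.g_symm _ _
  have s3 : K.g K.ξ Z = K.g Z K.ξ := K.g_symm _ _
  have s4 : K.g Z (K.φ W) = K.g (K.φ W) Z := K.g_symm _ _
  have h4 : (K.cc * K.g (K.φ Z) W + K.cc * K.g (K.φ Z) W)
      + (K.cc * K.g (K.φ Z) W + K.cc * K.g (K.φ Z) W) = (0 + 0) + (0 + 0) := by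
    linear_combination ha + hbb - hskew + hpair + K.g K.ξ K.ξ * s1 - K.g Z K.ξ * s2
      + K.g W K.ξ * s3
      + (2 * K.g Z K.ξ * K.g K.ξ W - 2 * K.g W K.ξ * K.g K.ξ Z
          + 4 * K.g Z K.ξ * K.g W K.ξ) * hsq
      - (2 * K.cc * K.g (K.φ Z) W - 2 * K.cc * K.g (K.φ W) Z) * hxx + 2 * cps
      - 2 * K.cc * s4
  have h2 := aux_half h4
  exact aux_half (by linear_combination h2)

lemma aux_cphi_v (Z : Derivation ℝ C C) : K.cc • K.φ Z = 0 := by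
  apply K.g_nondeg
  intro W
  rw [K.g_smul_left, K.aux_cphi]

end KenmotsuManifold
namespace KenmotsuManifold

variable {n : ℕ} {C : Type*} [CommRing C] [Algebra ℝ C] (K : KenmotsuManifold n C)

/-- clean form: `∇_X ξ = X - η(X)ξ` -/
lemma aux_nabla_xi' (X : Derivation ℝ C C) :
    K.nabla X K.ξ = X - K.g X K.ξ • K.ξ := by
  rw [K.aux_nabla_xi, K.aux_cphi_v, sub_zero]

/-- clean form: `R(X,Y)ξ = η(X)Y - η(Y)X` -/
lemma aux_rm_xi' (X Y : Derivation ℝ C C) :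
    K.Rm X Y K.ξ = K.g X K.ξ • Y - K.g Y K.ξ • X := by
  rw [K.aux_rm_xi]
  have h1 : (2 * (K.cc * K.g Y K.ξ)) • K.φ X = 0 := by
    rw [show 2 * (K.cc * K.g Y K.ξ) = (2 * K.g Y K.ξ) * K.cc by ring, mul_smul,
      K.aux_cphi_v, smul_zero]
  have h2 : (2 * (K.cc * K.g X K.ξ)) • K.φ Y = 0 := by
    rw [show 2 * (K.cc * K.g X K.ξ) = (2 * K.g X K.ξ) * K.cc by ring, mul_smul,
      K.aux_cphi_v, smul_zero]
  rw [h1, h2, add_zero, sub_zero]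

lemma aux_g_frame (A B : Derivation ℝ C C) :
    K.g A B = ∑ i, K.g A (K.e i) * K.g B (K.e i) := by
  conv_lhs => rw [show A = ∑ i, K.g A (K.e i) • K.e i from K.frame_span A]
  rw [K.aux_g_sum_left]
  exact Finset.sum_congr rfl fun i _ => by rw [K.g_smul_left, K.g_symm (K.e i) B]

/-- `S*(Y, ξ) = 0` -/
lemma aux_sstar_xi2 (Y : Derivation ℝ C C) : K.Sstar Y K.ξ = 0 := by
  rw [Sstar]
  have hz : ∀ i ∈ Finset.univ, K.g (K.Rm Y (K.φ K.ξ) (K.φ (K.e i))) (K.e i) = 0 := by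
    intro i _
    rw [K.aux_phi_xi, K.aux_rm_smul2, K.g_smul_left]
    have hpair := K.aux_rm_pair Y K.ξ (K.φ (K.e i)) (K.e i)
    have hskew := K.aux_rm_skew34 (K.φ (K.e i)) (K.e i) Y K.ξ
    have hx : K.g (K.Rm (K.φ (K.e i)) (K.e i) K.ξ) Y
        = K.g (K.φ (K.e i)) K.ξ * K.g (K.e i) Y - K.g (K.e i) K.ξ * K.g (K.φ (K.e i)) Y := by
      rw [K.aux_rm_xi', K.aux_g_sub_left, K.g_smul_left, K.g_smul_left]
    have he := K.aux_eta_phi (K.e i)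
    have hc1 := K.aux_cphi (K.e i) Y
    have hsq := K.aux_cc_sq
    linear_combination K.cc * hpair + K.cc * hskew - K.cc * hx
      - (K.cc * K.g (K.e i) Y) * he - (K.g (K.e i) K.ξ * K.g (K.e i) Y) * hsq
      + K.g (K.e i) K.ξ * hc1
  rw [Finset.sum_eq_zero hz, smul_zero]

/-- `S*(ξ, X) = 0` -/
lemma aux_sstar_xi1 (X : Derivation ℝ C C) : K.Sstar K.ξ X = 0 := by
  rw [Sstar]
  have hterm : ∀ i : Fin (2 * n + 1), K.g (K.Rm K.ξ (K.φ X) (K.φ (K.e i))) (K.e i)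
      = -(K.g K.ξ (K.e i) * K.g X (K.e i))
        + (K.g K.ξ (K.e i) * K.g K.ξ (K.e i)) * K.g X K.ξ := by
    intro i
    have hpair := K.aux_rm_pair K.ξ (K.φ X) (K.φ (K.e i)) (K.e i)
    have hx : K.g (K.Rm (K.φ (K.e i)) (K.e i) K.ξ) (K.φ X)
        = K.g (K.φ (K.e i)) K.ξ * K.g (K.e i) (K.φ X)
          - K.g (K.e i) K.ξ * K.g (K.φ (K.e i)) (K.φ X) := by
      rw [K.aux_rm_xi', K.aux_g_sub_left, K.g_smul_left, K.g_smul_left]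
    have he := K.aux_eta_phi (K.e i)
    have hc1 := K.aux_cphi X (K.e i)
    have hcompat := K.compat_phi (K.e i) X
    rw [K.eta_def, K.eta_def] at hcompat
    have s5 : K.g (K.e i) (K.φ X) = K.g (K.φ X) (K.e i) := K.g_symm _ _
    have s6 : K.g K.ξ (K.e i) = K.g (K.e i) K.ξ := K.g_symm _ _
    have s8 : K.g (K.e i) X = K.g X (K.e i) := K.g_symm _ _
    linear_combination hpair + hx - K.g (K.e i) K.ξ * hcompat
      + K.g (K.e i) (K.φ X) * he + (K.cc * K.g (K.e i) K.ξ) * s5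
      + K.g (K.e i) K.ξ * hc1 - K.g (K.e i) K.ξ * s8 + K.g X (K.e i) * s6
      - ((K.g K.ξ (K.e i) + K.g (K.e i) K.ξ) * K.g X K.ξ) * s6
  have hz : ∑ i, K.g (K.Rm K.ξ (K.φ X) (K.φ (K.e i))) (K.e i) = 0 := by
    calc ∑ i, K.g (K.Rm K.ξ (K.φ X) (K.φ (K.e i))) (K.e i)
        = ∑ i, (-(K.g K.ξ (K.e i) * K.g X (K.e i))
            + (K.g K.ξ (K.e i) * K.g K.ξ (K.e i)) * K.g X K.ξ) :=
          Finset.sum_congr rfl fun i _ => hterm i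
      _ = -(∑ i, K.g K.ξ (K.e i) * K.g X (K.e i))
            + (∑ i, K.g K.ξ (K.e i) * K.g K.ξ (K.e i)) * K.g X K.ξ := by
          rw [Finset.sum_add_distrib, Finset.sum_neg_distrib, Finset.sum_mul]
      _ = 0 := by
          rw [← K.aux_g_frame K.ξ X, ← K.aux_g_frame K.ξ K.ξ, K.aux_g_xi_xi, one_mul,
            K.g_symm K.ξ X]
          ring
  rw [hz, smul_zero]

end KenmotsuManifold
open KenmotsuManifold in
/-- If the metric of a Kenmotsu manifold is a gradient almost
`*`-Ricci soliton with potential function `f` and soliton function `λ`, then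
`d(f+λ) = ξ(f+λ) η`, i.e. `X(f+λ) = ξ(f+λ) η(X)` for all `X` (so `X(f+λ) = 0`
for every `X` in the kernel of `η`). -/
theorem stmt13 {n : ℕ} {C : Type*} [CommRing C] [Algebra ℝ C]
    (K : KenmotsuManifold n C) (f l : C) (F : Derivation ℝ C C)
    (h : K.IsGradAlmostStarRicciSoliton f F l) (X : Derivation ℝ C C) :
    X (f + l) = K.ξ (f + l) * K.η X := by
  obtain ⟨hF, hsol⟩ := h
  -- the Hessian-type quantity `g(∇_A F, B)`
  have hH : ∀ A B : Derivation ℝ C C,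
      K.g (K.nabla A F) B = -K.Sstar A B - l * K.g A B := by
    intro A B
    linear_combination hsol A B
  -- `g(∇_A F, ξ) = -l·η(A)`
  have hHxi : ∀ A : Derivation ℝ C C, K.g (K.nabla A F) K.ξ = -(l * K.g A K.ξ) := by
    intro A
    rw [hH, K.aux_sstar_xi2]
    ring
  -- `∇_ξ ξ = 0`
  have hxixi : K.nabla K.ξ K.ξ = 0 := by
    rw [K.aux_nabla_xi', K.aux_g_xi_xi, one_smul, sub_self]
  -- term 1 : `g(∇_X ∇_ξ F, ξ) = -X l`
  have t1 : K.g (K.nabla X (K.nabla K.ξ F)) K.ξ = -X l := by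
    have hmc := K.metric_compat X (K.nabla K.ξ F) K.ξ
    have e1 : K.g (K.nabla K.ξ F) K.ξ = -l := by
      rw [hHxi, K.aux_g_xi_xi, mul_one]
    have e2 : K.g (K.nabla K.ξ F) (K.nabla X K.ξ) = 0 := by
      rw [K.aux_nabla_xi', K.aux_g_sub_right, K.aux_g_smul_right, e1, hH, K.aux_sstar_xi1,
        K.g_symm K.ξ X]
      ring
    rw [e1, e2, add_zero] at hmc
    rw [← hmc, map_neg]
  -- term 2 : `g(∇_ξ ∇_X F, ξ) = -(ξ l · η X + l · ξ (η X))`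
  have t2 : K.g (K.nabla K.ξ (K.nabla X F)) K.ξ
      = -(K.ξ l * K.g X K.ξ + l * K.ξ (K.g X K.ξ)) := by
    have hmc := K.metric_compat K.ξ (K.nabla X F) K.ξ
    rw [hxixi, K.aux_g_zero_right, add_zero, hHxi, map_neg, Derivation.leibniz,
      smul_eq_mul, smul_eq_mul] at hmc
    rw [← hmc]
    ring
  -- term 3 : `g(∇_[X,ξ] F, ξ) = l · ξ (η X)`
  have t3 : K.g (K.nabla ⁅X, K.ξ⁆ F) K.ξ = l * K.ξ (K.g X K.ξ) := by
    have hb : K.g ⁅X, K.ξ⁆ K.ξ = -K.ξ (K.g X K.ξ) := by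
      rw [← K.torsion_free, K.aux_g_sub_left, K.aux_eta_nabla_xi]
      have := K.metric_compat K.ξ X K.ξ
      rw [hxixi, K.aux_g_zero_right, add_zero] at this
      rw [← this]
      ring
    rw [hHxi, hb]
    ring
  -- way 2: the curvature paired with `ξ`
  have way2 : K.g (K.Rm X K.ξ F) K.ξ = -X l + K.ξ l * K.g X K.ξ := by
    simp only [Rm]
    rw [K.aux_g_sub_left, K.aux_g_sub_left, t1, t2, t3]
    ring
  -- way 1: using the curvature formula for `R(X,ξ)ξ`
  have way1 : K.g (K.Rm X K.ξ F) K.ξ = -(K.g X K.ξ * K.ξ f) + X f := by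
    have hskew := K.aux_rm_skew34 X K.ξ F K.ξ
    have hx : K.g (K.Rm X K.ξ K.ξ) F
        = K.g X K.ξ * K.g K.ξ F - K.g K.ξ K.ξ * K.g X F := by
      rw [K.aux_rm_xi', K.aux_g_sub_left, K.g_smul_left, K.g_smul_left]
    have e3 : K.g K.ξ F = K.ξ f := by rw [K.g_symm, hF]
    have e4 : K.g X F = X f := by rw [K.g_symm, hF]
    rw [e3, e4, K.aux_g_xi_xi, one_mul] at hx
    linear_combination hskew - hx
  rw [way2] at way1
  rw [map_add, map_add, K.eta_def]
  linear_combination -way1
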